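/- Let (X,d,m,ℰ,ℱ) be a conservative MMD space with doubling measure m whose heat kernel satisfies the sub-Gaussian upper bound p_t(x,y) ≤ C₁/m(B(x,Ψ⁻¹(t))) · exp(−c₁ t Φ(c₂ d(x,y)/t)) for a scale function Ψ, with Φ(s) = sup_{r>0}(s/r − 1/Ψ(r)). Then for every f ∈ L²(X,m) and every r > 0, lim_{t↓0} (1/2t) ∫_X ∫_{X \ B(x,r)} (f(x)−f(y))² p_t(x,y) m(dy) m(dx) = 0. -/

import Mathlib

/-!
With `ρ = Ψ⁻¹(t)` as the radius in the supremum defining `Φ`, the heat kernel bound becomes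
exponential decay at scale `ρ`: `p_t(x,y) ≲ exp(-c₁c₂ d(x,y)/ρ) / m(B(x,ρ))`. Summed over the
dyadic annuli `2ᵏr ≤ d < 2ᵏ⁺¹r` with volume doubling, this bounds both `∫_{B(x,r)ᶜ} p_t(x,y) dy`
and `∫_{B(y,r)ᶜ} p_t(x,y) dx` by a power of `r/ρ` times `exp(-c₁c₂ r/ρ)`; for the second one
`m(B(x,ρ))` is compared with `m(B(y,ρ))`, again by doubling. As `(f x - f y)² ≤ 2 f(x)² + 2 f(y)²`,
the far part of the form is at most `4‖f‖₂²` times this bound, while `1/t ≲ (r/ρ)^β₂` by the upper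
scaling of `Ψ`. Since `r/ρ → ∞` as `t ↓ 0`, the exponential wins.
-/

open scoped ENNReal
open MeasureTheory

/-- The Legendre-type transform `Φ(s) = sup_{r>0} (s/r - 1/Ψ(r))` of a scale
function `Ψ`. -/
noncomputable def Phi (Ψ : ℝ → ℝ) (s : ℝ) : ℝ :=
  sSup {t : ℝ | ∃ r > (0:ℝ), t = s / r - 1 / Ψ r}

open Filter Topology Metric Set Function

lemma exists_forall_mul_sub_mul_rpow_le (s : ℝ) {κ β : ℝ} (hκ : 0 < κ) (hβ : 1 < β) :
    ∃ M, ∀ w, 0 ≤ w → s * w - κ * w ^ β ≤ M := by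
  obtain ⟨W, hW⟩ := eventually_atTop.1
    ((tendsto_rpow_atTop (sub_pos.2 hβ)).eventually_ge_atTop (s / κ))
  refine ⟨|s| * max W 0, fun w hw => ?_⟩
  rcases le_total w W with hwW | hWw
  · have hpow : 0 ≤ κ * w ^ β := by positivity
    nlinarith [le_abs_self s, abs_nonneg s, le_max_left W 0]
  · have hsw : s * w ≤ κ * w ^ β := by
      calc s * w ≤ κ * w ^ (β - 1) * w :=
            mul_le_mul_of_nonneg_right ((div_le_iff₀' hκ).1 (hW w hWw)) hw
        _ = κ * w ^ β := by
            rw [mul_assoc, ← Real.rpow_add_one' hw (by linarith), sub_add_cancel]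
    nlinarith [abs_nonneg s, le_max_right W 0]

lemma sub_inv_le_Phi {Ψ : ℝ → ℝ} {C β : ℝ} (hC : 0 < C) (hβ : 1 < β)
    (hΨpos : ∀ ρ > (0:ℝ), 0 < Ψ ρ)
    (hlow : ∀ ρ R : ℝ, 0 < ρ → ρ ≤ R → C⁻¹ * (R / ρ) ^ β ≤ Ψ R / Ψ ρ)
    (s : ℝ) {ρ : ℝ} (hρ : 0 < ρ) :
    s / ρ - 1 / Ψ ρ ≤ Phi Ψ s := by
  refine le_csSup ?_ ⟨ρ, hρ, rfl⟩
  -- for `ρ' ≤ 1`, lower scaling gives `1 / Ψ ρ' ≥ (C Ψ 1)⁻¹ ρ'^(-β)`, which beats `s / ρ'`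
  have hΨ1 := hΨpos 1 one_pos
  obtain ⟨M, hM⟩ := exists_forall_mul_sub_mul_rpow_le s (κ := (C * Ψ 1)⁻¹) (by positivity) hβ
  refine ⟨max |s| M, ?_⟩
  rintro _ ⟨ρ', hρ', rfl⟩
  have hΨρ' := hΨpos ρ' hρ'
  rcases le_total 1 ρ' with h1 | h1
  · have hsρ : s / ρ' ≤ |s| := by
      rw [div_le_iff₀ hρ']; nlinarith [le_abs_self s, abs_nonneg s]
    have hΨinv : 0 < 1 / Ψ ρ' := by positivity
    linarith [le_max_left |s| M]
  · have hscale : (C * Ψ 1)⁻¹ * (1 / ρ') ^ β ≤ 1 / Ψ ρ' := by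
      have h := hlow ρ' 1 hρ' h1
      rw [mul_inv, mul_right_comm, ← div_eq_mul_inv, div_le_iff₀ hΨ1]
      calc C⁻¹ * (1 / ρ') ^ β ≤ Ψ 1 / Ψ ρ' := h
        _ = 1 / Ψ ρ' * Ψ 1 := by ring
    have hMρ := hM (1 / ρ') (by positivity)
    rw [div_eq_mul_one_div s ρ']
    linarith [le_max_right |s| M]

lemma le_exp_neg_dist_div_of_le_exp_neg_Phi {X : Type*} [MetricSpace X] [MeasurableSpace X]
    {m : Measure X} {q : X → X → ℝ≥0∞} {Ψ : ℝ → ℝ} {C β C₁ c₁ c₂ t ρ : ℝ} (hC : 0 < C) (hβ : 1 < β)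
    (hΨpos : ∀ ρ > (0:ℝ), 0 < Ψ ρ)
    (hlow : ∀ ρ R : ℝ, 0 < ρ → ρ ≤ R → C⁻¹ * (R / ρ) ^ β ≤ Ψ R / Ψ ρ)
    (hρ : 0 < ρ) (hΨρ : Ψ ρ = t) (hC₁ : 0 ≤ C₁) (hc₁ : 0 ≤ c₁)
    (hq : ∀ x y, q x y ≤ ENNReal.ofReal (C₁ * Real.exp (-(c₁ * t * Phi Ψ (c₂ * dist x y / t)))) /
      m (ball x ρ)) (x y : X) :
    q x y ≤ ENNReal.ofReal (C₁ * Real.exp c₁) *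
      ENNReal.ofReal (Real.exp (-(c₁ * c₂ * (dist x y / ρ)))) / m (ball x ρ) := by
  have ht : 0 < t := hΨρ ▸ hΨpos ρ hρ
  have hΦ := sub_inv_le_Phi hC hβ hΨpos hlow (c₂ * dist x y / t) hρ
  rw [hΨρ] at hΦ
  have hexp : -(c₁ * t * Phi Ψ (c₂ * dist x y / t)) ≤ c₁ + -(c₁ * c₂ * (dist x y / ρ)) := by
    have h := mul_le_mul_of_nonneg_left hΦ (by positivity : 0 ≤ c₁ * t)
    have heq : c₁ * t * (c₂ * dist x y / t / ρ - 1 / t) = c₁ * c₂ * (dist x y / ρ) - c₁ := by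
      field_simp
    linarith
  refine (hq x y).trans ?_
  rw [← ENNReal.ofReal_mul (by positivity), mul_assoc C₁, ← Real.exp_add]
  gcongr

lemma tendsto_div_rightInverse_atTop {Ψ ψinv : ℝ → ℝ} (hΨpos : ∀ ρ > (0:ℝ), 0 < Ψ ρ)
    (hΨmono : StrictMonoOn Ψ (Ioi 0)) (hinv : ∀ t > (0:ℝ), 0 < ψinv t ∧ Ψ (ψinv t) = t)
    {r : ℝ} (hr : 0 < r) :
    Tendsto (fun t => r / ψinv t) (𝓝[>] 0) atTop := by
  have hψinv : Tendsto ψinv (𝓝[>] 0) (𝓝[>] 0) := by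
    refine tendsto_nhdsWithin_iff.2 ⟨tendsto_order.2 ⟨fun b hb => ?_, fun δ hδ => ?_⟩, ?_⟩
    · filter_upwards [self_mem_nhdsWithin] with t ht using hb.trans (hinv t ht).1
    · filter_upwards [Ioo_mem_nhdsGT (hΨpos δ hδ)] with t ⟨ht, htδ⟩
      obtain ⟨hρ, hΨρ⟩ := hinv t ht
      by_contra! hδρ
      have := hΨmono.monotoneOn hδ (mem_Ioi.2 hρ) hδρ
      linarith
    · filter_upwards [self_mem_nhdsWithin] with t ht using (hinv t ht).1
  exact ((tendsto_inv_nhdsGT_zero.comp hψinv).const_mul_atTop hr).congr fun t =>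
    (div_eq_mul_inv r _).symm

lemma one_div_two_mul_le_of_div_le {Ψ : ℝ → ℝ} {C β t ρ r : ℝ} (hΨr : 0 < Ψ r) (ht : 0 < t)
    (hΨρ : Ψ ρ = t) (hup : Ψ r / Ψ ρ ≤ C * (r / ρ) ^ β) :
    1 / (2 * t) ≤ C / Ψ r * (r / ρ) ^ β := by
  rw [hΨρ, div_le_iff₀ ht] at hup
  rw [div_mul_eq_mul_div, le_div_iff₀ hΨr, div_mul_eq_mul_div, one_mul,
    div_le_iff₀ (mul_pos two_pos ht)]
  linarith

section Doubling

variable {X : Type*} [MetricSpace X] [MeasurableSpace X] {m : Measure X} {D : ℝ≥0∞}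

lemma measure_ball_le_pow_mul_of_le_two_pow_mul
    (hdoub : ∀ (x : X) (ρ : ℝ), 0 < ρ → m (ball x (2 * ρ)) ≤ D * m (ball x ρ))
    (x : X) {ρ R : ℝ} (hρ : 0 < ρ) {n : ℕ} (hR : R ≤ 2 ^ n * ρ) :
    m (ball x R) ≤ D ^ n * m (ball x ρ) := by
  refine (measure_mono (ball_subset_ball hR)).trans ?_
  clear hR
  induction n with
  | zero => simp
  | succ n ih =>
    calc m (ball x (2 ^ (n + 1) * ρ)) = m (ball x (2 * (2 ^ n * ρ))) := by ring_nf
      _ ≤ D * m (ball x (2 ^ n * ρ)) := hdoub x _ (by positivity)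
      _ ≤ D * (D ^ n * m (ball x ρ)) := by gcongr
      _ = D ^ (n + 1) * m (ball x ρ) := by ring

lemma pow_le_ofReal_rpow_logb (hD : 1 ≤ D) (hDtop : D ≠ ⊤) {n : ℕ} {u : ℝ} (hu : 2 ^ n ≤ u) :
    D ^ n ≤ ENNReal.ofReal (u ^ Real.logb 2 D.toReal) := by
  have hD1 : 1 ≤ D.toReal := by simpa using ENNReal.toReal_mono hDtop hD
  have h2n : D.toReal ^ n = ((2 : ℝ) ^ n) ^ Real.logb 2 D.toReal := by
    conv_lhs => rw [← Real.rpow_logb two_pos (by norm_num) (by linarith : 0 < D.toReal)]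
    rw [← Real.rpow_mul_natCast zero_le_two, mul_comm, Real.rpow_natCast_mul zero_le_two]
  calc D ^ n = ENNReal.ofReal (D.toReal ^ n) := by
        rw [ENNReal.ofReal_pow ENNReal.toReal_nonneg, ENNReal.ofReal_toReal hDtop]
    _ ≤ ENNReal.ofReal (u ^ Real.logb 2 D.toReal) := by
        rw [h2n]
        exact ENNReal.ofReal_le_ofReal
          (Real.rpow_le_rpow (by positivity) hu (Real.logb_nonneg one_lt_two hD1))

lemma sigmaFinite_of_measure_ball_lt_top (h : ∀ (x : X) (ρ : ℝ), 0 < ρ → m (ball x ρ) < ⊤) :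
    SigmaFinite m := by
  rcases isEmpty_or_nonempty X with hX | ⟨⟨x₀⟩⟩
  · rw [m.eq_zero_of_isEmpty]; infer_instance
  · exact ⟨⟨⟨fun n : ℕ => ball x₀ (n + 1), fun _ => trivial,
      fun n => h x₀ _ (by positivity), by
        refine eq_univ_of_forall fun x => mem_iUnion.2 ?_
        obtain ⟨n, hn⟩ := exists_nat_gt (dist x x₀)
        exact ⟨n, mem_ball.2 (by linarith)⟩⟩⟩⟩

lemma secondCountableTopology_of_measure_ball_pos [OpensMeasurableSpace X] [SFinite m]
    (h : ∀ (x : X) (ρ : ℝ), 0 < ρ → 0 < m (ball x ρ)) : SecondCountableTopology X := by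
  -- a maximal `ε`-separated set is `ε`-dense, and countable since the disjoint balls of radius
  -- `ε / 2` around its points have positive measure
  refine secondCountable_of_almost_dense_set fun ε hε => ?_
  obtain ⟨N, -, hN⟩ := zorn_subset_nonempty {N : Set X | N.Pairwise fun x y => ε ≤ dist x y}
    (fun c hc hchain _ => ⟨⋃₀ c, (pairwise_sUnion hchain.directedOn).2 hc,
      fun _ => subset_sUnion_of_mem⟩) ∅ (pairwise_empty _)
  refine ⟨N, ?_, fun x => ?_⟩
  · have hdisj : Pairwise (Disjoint on fun y : N => ball (y : X) (ε / 2)) := fun y z hyz =>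
      ball_disjoint_ball (by linarith [hN.prop y.2 z.2 (Subtype.coe_injective.ne hyz)] :
        ε / 2 + ε / 2 ≤ dist (y : X) z)
    have hcount := Measure.countable_meas_pos_of_disjoint_iUnion (μ := m)
      (fun _ => measurableSet_ball) hdisj
    exact countable_coe_iff.1 <| countable_univ_iff.1 <|
      hcount.mono fun y _ => h y _ (half_pos hε)
  · by_contra! hx
    have hsep : insert x N ∈ {N : Set X | N.Pairwise fun x y => ε ≤ dist x y} :=
      pairwise_insert.2 ⟨hN.prop, fun y hy _ => ⟨(hx y hy).le, dist_comm x y ▸ (hx y hy).le⟩⟩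
    have hxN : x ∈ N := (hN.eq_of_subset hsep (subset_insert x N)) ▸ mem_insert x N
    linarith [hx x hxN, dist_self x]

end Doubling

section Tails

lemma compl_ball_subset_iUnion_annulus {X : Type*} [MetricSpace X] (z : X) {r : ℝ} (hr : 0 < r) :
    (ball z r)ᶜ ⊆ ⋃ k : ℕ, ball z (2 ^ (k + 1) * r) \ ball z (2 ^ k * r) := by
  intro w hw
  rw [mem_compl_iff, mem_ball, not_lt] at hw
  obtain ⟨k, hk, hk'⟩ := exists_nat_pow_near ((one_le_div hr).2 hw) one_lt_two
  exact mem_iUnion.2 ⟨k, mem_ball.2 ((div_lt_iff₀ hr).1 hk'),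
    fun h => (mem_ball.1 h).not_ge ((le_div_iff₀ hr).1 hk)⟩

variable {X : Type*} [MetricSpace X] [MeasurableSpace X] {m : Measure X} {D : ℝ≥0∞}

lemma setLIntegral_compl_ball_le_of_annulus
    (hmball : ∀ (x : X) (ρ : ℝ), 0 < ρ → 0 < m (ball x ρ) ∧ m (ball x ρ) < ⊤)
    (hdoub : ∀ (x : X) (ρ : ℝ), 0 < ρ → m (ball x (2 * ρ)) ≤ D * m (ball x ρ))
    {z : X} {r ρ : ℝ} (hr : 0 < r) (hρ : 0 < ρ) {N : ℕ} (hN : r ≤ 2 ^ N * ρ)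
    {c E : ℝ≥0∞} (hE : D ^ 2 * E ≤ 2⁻¹) {h : X → ℝ≥0∞}
    (hh : ∀ k : ℕ, ∀ w ∈ ball z (2 ^ (k + 1) * r) \ ball z (2 ^ k * r),
      h w ≤ D ^ (k + 2 + N) * c * E ^ (k + 1) / m (ball z ρ)) :
    ∫⁻ w in (ball z r)ᶜ, h w ∂m ≤ 2 * D ^ (3 + 2 * N) * c * E := by
  obtain ⟨hV0, hVtop⟩ := hmball z ρ hρ
  have hannulus : ∀ k : ℕ, ∫⁻ w in ball z (2 ^ (k + 1) * r) \ ball z (2 ^ k * r), h w ∂m ≤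
      D ^ (3 + 2 * N) * c * E * (D ^ 2 * E) ^ k := by
    intro k
    have hvol : m (ball z (2 ^ (k + 1) * r) \ ball z (2 ^ k * r)) ≤
        D ^ (k + 1 + N) * m (ball z ρ) :=
      (measure_mono sdiff_subset).trans <| measure_ball_le_pow_mul_of_le_two_pow_mul hdoub z hρ <|
        by rw [pow_add _ (k + 1), mul_assoc]; gcongr
    calc ∫⁻ w in ball z (2 ^ (k + 1) * r) \ ball z (2 ^ k * r), h w ∂m
        ≤ ∫⁻ _ in ball z (2 ^ (k + 1) * r) \ ball z (2 ^ k * r),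
            D ^ (k + 2 + N) * c * E ^ (k + 1) / m (ball z ρ) ∂m :=
          setLIntegral_mono measurable_const (hh k)
      _ ≤ D ^ (k + 2 + N) * c * E ^ (k + 1) / m (ball z ρ) * (D ^ (k + 1 + N) * m (ball z ρ)) := by
          rw [setLIntegral_const]; gcongr
      _ = D ^ (3 + 2 * N) * c * E * (D ^ 2 * E) ^ k := by
          rw [mul_comm (D ^ (k + 1 + N)), ← mul_assoc, ENNReal.div_mul_cancel hV0.ne' hVtop.ne]
          ring
  calc ∫⁻ w in (ball z r)ᶜ, h w ∂m
      ≤ ∫⁻ w in ⋃ k : ℕ, ball z (2 ^ (k + 1) * r) \ ball z (2 ^ k * r), h w ∂m :=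
        lintegral_mono_set (compl_ball_subset_iUnion_annulus z hr)
    _ ≤ ∑' k : ℕ, ∫⁻ w in ball z (2 ^ (k + 1) * r) \ ball z (2 ^ k * r), h w ∂m :=
        lintegral_iUnion_le _ _
    _ ≤ ∑' k : ℕ, D ^ (3 + 2 * N) * c * E * (D ^ 2 * E) ^ k := ENNReal.tsum_le_tsum hannulus
    _ ≤ ∑' k : ℕ, D ^ (3 + 2 * N) * c * E * 2⁻¹ ^ k := by gcongr
    _ = 2 * D ^ (3 + 2 * N) * c * E := by
        rw [ENNReal.tsum_mul_left, ENNReal.tsum_geometric_two]; ring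

lemma ofReal_exp_neg_mul_div_le_pow {a r ρ d : ℝ} (ha : 0 ≤ a) (hρ : 0 < ρ) (hr : 0 ≤ r) {k : ℕ}
    (hd : 2 ^ k * r ≤ d) : ENNReal.ofReal (Real.exp (-(a * (d / ρ)))) ≤
      ENNReal.ofReal (Real.exp (-(a * (r / ρ)))) ^ (k + 1) := by
  rw [← ENNReal.ofReal_pow (Real.exp_nonneg _), ← Real.exp_nat_mul]
  refine ENNReal.ofReal_le_ofReal (Real.exp_le_exp.2 ?_)
  have hk : ((k + 1 : ℕ) : ℝ) * r ≤ d :=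
    (mul_le_mul_of_nonneg_right (by exact_mod_cast Nat.lt_two_pow_self) hr).trans hd
  have hkd : a * ((k + 1 : ℕ) * r / ρ) ≤ a * (d / ρ) := by gcongr
  rw [mul_div_assoc] at hkd
  linarith

lemma setLIntegral_compl_ball_le_of_expDecay_right (hD : 1 ≤ D)
    (hmball : ∀ (x : X) (ρ : ℝ), 0 < ρ → 0 < m (ball x ρ) ∧ m (ball x ρ) < ⊤)
    (hdoub : ∀ (x : X) (ρ : ℝ), 0 < ρ → m (ball x (2 * ρ)) ≤ D * m (ball x ρ))
    {q : X → X → ℝ≥0∞} {c : ℝ≥0∞} {a r ρ : ℝ} (ha : 0 ≤ a) (hr : 0 < r) (hρ : 0 < ρ)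
    {N : ℕ} (hN : r ≤ 2 ^ N * ρ)
    (hq : ∀ x y, q x y ≤ c * ENNReal.ofReal (Real.exp (-(a * (dist x y / ρ)))) / m (ball x ρ))
    (hE : D ^ 2 * ENNReal.ofReal (Real.exp (-(a * (r / ρ)))) ≤ 2⁻¹) (x : X) :
    ∫⁻ y in (ball x r)ᶜ, q x y ∂m ≤
      2 * D ^ (3 + 2 * N) * c * ENNReal.ofReal (Real.exp (-(a * (r / ρ)))) := by
  refine setLIntegral_compl_ball_le_of_annulus hmball hdoub hr hρ hN hE fun k y hy => ?_
  have hd : 2 ^ k * r ≤ dist x y := dist_comm x y ▸ not_lt.1 hy.2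
  calc q x y ≤ c * ENNReal.ofReal (Real.exp (-(a * (dist x y / ρ)))) / m (ball x ρ) := hq x y
    _ ≤ c * ENNReal.ofReal (Real.exp (-(a * (r / ρ)))) ^ (k + 1) / m (ball x ρ) := by
        gcongr; exact ofReal_exp_neg_mul_div_le_pow ha hρ hr.le hd
    _ ≤ D ^ (k + 2 + N) * c * ENNReal.ofReal (Real.exp (-(a * (r / ρ)))) ^ (k + 1) /
          m (ball x ρ) := by
        gcongr; exact le_mul_of_one_le_left' (one_le_pow₀ hD)

lemma setLIntegral_compl_ball_le_of_expDecay_left (hD : 1 ≤ D) (hDtop : D ≠ ⊤)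
    (hmball : ∀ (x : X) (ρ : ℝ), 0 < ρ → 0 < m (ball x ρ) ∧ m (ball x ρ) < ⊤)
    (hdoub : ∀ (x : X) (ρ : ℝ), 0 < ρ → m (ball x (2 * ρ)) ≤ D * m (ball x ρ))
    {q : X → X → ℝ≥0∞} {c : ℝ≥0∞} {a r ρ : ℝ} (ha : 0 ≤ a) (hρ : 0 < ρ) (hρr : ρ ≤ r)
    {N : ℕ} (hN : r ≤ 2 ^ N * ρ)
    (hq : ∀ x y, q x y ≤ c * ENNReal.ofReal (Real.exp (-(a * (dist x y / ρ)))) / m (ball x ρ))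
    (hE : D ^ 2 * ENNReal.ofReal (Real.exp (-(a * (r / ρ)))) ≤ 2⁻¹) (y : X) :
    ∫⁻ x in (ball y r)ᶜ, q x y ∂m ≤
      2 * D ^ (3 + 2 * N) * c * ENNReal.ofReal (Real.exp (-(a * (r / ρ)))) := by
  have hr : 0 < r := hρ.trans_le hρr
  refine setLIntegral_compl_ball_le_of_annulus hmball hdoub hr hρ hN hE fun k x hx => ?_
  set E := ENNReal.ofReal (Real.exp (-(a * (r / ρ))))
  have hvol : m (ball y ρ) ≤ D ^ (k + 2 + N) * m (ball x ρ) := by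
    refine (measure_mono (ball_subset_ball' le_rfl)).trans
      (measure_ball_le_pow_mul_of_le_two_pow_mul hdoub x hρ ?_)
    have hxy : dist y x < 2 ^ (k + 1) * r := dist_comm x y ▸ hx.1
    have hr' : r ≤ 2 ^ (k + 1) * r := le_mul_of_one_le_left hr.le (one_le_pow₀ one_le_two)
    calc ρ + dist y x ≤ 2 ^ (k + 1) * r + 2 ^ (k + 1) * r := by linarith
      _ = 2 ^ (k + 2) * r := by ring
      _ ≤ 2 ^ (k + 2) * (2 ^ N * ρ) := by gcongr
      _ = 2 ^ (k + 2 + N) * ρ := by ring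
  have hD0 : D ^ (k + 2 + N) ≠ 0 := pow_ne_zero _ (zero_lt_one.trans_le hD).ne'
  calc q x y ≤ c * ENNReal.ofReal (Real.exp (-(a * (dist x y / ρ)))) / m (ball x ρ) := hq x y
    _ ≤ c * E ^ (k + 1) / m (ball x ρ) := by
        gcongr; exact ofReal_exp_neg_mul_div_le_pow ha hρ hr.le (not_lt.1 hx.2)
    _ = D ^ (k + 2 + N) * (c * E ^ (k + 1)) / (D ^ (k + 2 + N) * m (ball x ρ)) :=
        (ENNReal.mul_div_mul_left _ _ hD0 (ENNReal.pow_ne_top hDtop)).symm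
    _ ≤ D ^ (k + 2 + N) * c * E ^ (k + 1) / m (ball y ρ) := by
        rw [← mul_assoc]; exact ENNReal.div_le_div_left hvol _

end Tails

lemma ofReal_sub_sq_le (a b : ℝ) :
    ENNReal.ofReal ((a - b) ^ 2) ≤ 2 * ENNReal.ofReal (a ^ 2) + 2 * ENNReal.ofReal (b ^ 2) := by
  rw [← ENNReal.ofReal_ofNat 2, ← ENNReal.ofReal_mul zero_le_two, ← ENNReal.ofReal_mul zero_le_two,
    ← ENNReal.ofReal_add (by positivity) (by positivity)]
  exact ENNReal.ofReal_le_ofReal (by nlinarith [sq_nonneg (a + b)])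

section FarPart

variable {X : Type*} [MetricSpace X] [MeasurableSpace X] [OpensMeasurableSpace X]
  [SecondCountableTopology X] {m : Measure X} [SFinite m]

lemma lintegral_setLIntegral_compl_ball_swap {F : X → X → ℝ≥0∞}
    (hF : AEMeasurable (uncurry F) (m.prod m)) (r : ℝ) :
    ∫⁻ x, ∫⁻ y in (ball x r)ᶜ, F x y ∂m ∂m = ∫⁻ y, ∫⁻ x in (ball y r)ᶜ, F x y ∂m ∂m := by
  set S := {p : X × X | r ≤ dist p.1 p.2}
  have hS : MeasurableSet S := measurableSet_le measurable_const continuous_dist.measurable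
  have hright : ∀ x, ∫⁻ y in (ball x r)ᶜ, F x y ∂m = ∫⁻ y, S.indicator (uncurry F) (x, y) ∂m :=
    fun x => by
      rw [← lintegral_indicator measurableSet_ball.compl]
      congr 1 with y
      simp only [indicator, S, mem_compl_iff, mem_ball, not_lt, mem_ofPred_eq, dist_comm y x,
        uncurry_apply_pair]
  have hleft : ∀ y, ∫⁻ x in (ball y r)ᶜ, F x y ∂m = ∫⁻ x, S.indicator (uncurry F) (x, y) ∂m :=
    fun y => by
      rw [← lintegral_indicator measurableSet_ball.compl]
      congr 1 with x
      simp only [indicator, S, mem_compl_iff, mem_ball, not_lt, mem_ofPred_eq, uncurry_apply_pair]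
  simp_rw [hright, hleft]
  exact lintegral_lintegral_swap (hF.indicator hS)

lemma lintegral_far_sq_sub_le {q : X → X → ℝ≥0∞} (hq : Measurable (uncurry q)) {f : X → ℝ}
    (hf : AEMeasurable f m) {r : ℝ} {T : ℝ≥0∞}
    (hright : ∀ x, ∫⁻ y in (ball x r)ᶜ, q x y ∂m ≤ T)
    (hleft : ∀ y, ∫⁻ x in (ball y r)ᶜ, q x y ∂m ≤ T) :
    ∫⁻ x, ∫⁻ y in (ball x r)ᶜ, ENNReal.ofReal ((f x - f y) ^ 2) * q x y ∂m ∂m ≤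
      4 * (∫⁻ x, ENNReal.ofReal (f x ^ 2) ∂m) * T := by
  set g : X → ℝ≥0∞ := fun x => 2 * ENNReal.ofReal (f x ^ 2)
  have hg : AEMeasurable g m := by fun_prop
  have hfirst : ∀ x, ∫⁻ y in (ball x r)ᶜ, g x * q x y ∂m ≤ g x * T := fun x => by
    rw [lintegral_const_mul _ hq.of_uncurry_left]
    gcongr; exact hright x
  have hsecond : ∫⁻ x, ∫⁻ y in (ball x r)ᶜ, g y * q x y ∂m ∂m ≤ ∫⁻ y, g y * T ∂m := by
    have hgq : AEMeasurable (uncurry fun x y => g y * q x y) (m.prod m) :=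
      (hg.comp_quasiMeasurePreserving Measure.quasiMeasurePreserving_snd).mul
        hq.aemeasurable
    rw [lintegral_setLIntegral_compl_ball_swap hgq]
    refine lintegral_mono fun y => ?_
    rw [lintegral_const_mul _ hq.of_uncurry_right]
    gcongr; exact hleft y
  calc ∫⁻ x, ∫⁻ y in (ball x r)ᶜ, ENNReal.ofReal ((f x - f y) ^ 2) * q x y ∂m ∂m
      ≤ ∫⁻ x, (g x * T + ∫⁻ y in (ball x r)ᶜ, g y * q x y ∂m) ∂m := by
        refine lintegral_mono fun x => ?_
        calc ∫⁻ y in (ball x r)ᶜ, ENNReal.ofReal ((f x - f y) ^ 2) * q x y ∂m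
            ≤ ∫⁻ y in (ball x r)ᶜ, (g x * q x y + g y * q x y) ∂m :=
              lintegral_mono fun y => by
                rw [← add_mul]; gcongr; exact ofReal_sub_sq_le _ _
          _ = ∫⁻ y in (ball x r)ᶜ, g x * q x y ∂m + ∫⁻ y in (ball x r)ᶜ, g y * q x y ∂m :=
              lintegral_add_left (hq.of_uncurry_left.const_mul _) _
          _ ≤ g x * T + ∫⁻ y in (ball x r)ᶜ, g y * q x y ∂m := by gcongr; exact hfirst x
    _ ≤ ∫⁻ x, g x * T ∂m + ∫⁻ y, g y * T ∂m := by
        rw [lintegral_add_left' (hg.mul_const T)]; gcongr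
    _ = 4 * (∫⁻ x, ENNReal.ofReal (f x ^ 2) ∂m) * T := by
        rw [lintegral_mul_const'' T hg, lintegral_const_mul'' 2 (by fun_prop)]; ring

lemma lintegral_far_sq_sub_le_of_expDecay {D : ℝ≥0∞} (hD : 1 ≤ D) (hDtop : D ≠ ⊤)
    (hmball : ∀ (x : X) (ρ : ℝ), 0 < ρ → 0 < m (ball x ρ) ∧ m (ball x ρ) < ⊤)
    (hdoub : ∀ (x : X) (ρ : ℝ), 0 < ρ → m (ball x (2 * ρ)) ≤ D * m (ball x ρ))
    {q : X → X → ℝ≥0∞} (hqm : Measurable (uncurry q)) {c : ℝ≥0∞} {a r ρ : ℝ} (ha : 0 ≤ a)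
    (hρ : 0 < ρ) (hρr : ρ ≤ r)
    (hq : ∀ x y, q x y ≤ c * ENNReal.ofReal (Real.exp (-(a * (dist x y / ρ)))) / m (ball x ρ))
    (hE : D ^ 2 * ENNReal.ofReal (Real.exp (-(a * (r / ρ)))) ≤ 2⁻¹)
    {f : X → ℝ} (hf : AEMeasurable f m) :
    ∫⁻ x, ∫⁻ y in (ball x r)ᶜ, ENNReal.ofReal ((f x - f y) ^ 2) * q x y ∂m ∂m ≤
      8 * (∫⁻ x, ENNReal.ofReal (f x ^ 2) ∂m) * D ^ 5 * c *
        ENNReal.ofReal ((r / ρ) ^ Real.logb 2 (D ^ 2).toReal * Real.exp (-(a * (r / ρ)))) := by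
  obtain ⟨n, hn, hn'⟩ := exists_nat_pow_near ((one_le_div hρ).2 hρr) one_lt_two
  have hN : r ≤ 2 ^ (n + 1) * ρ := ((div_lt_iff₀ hρ).1 hn').le
  refine (lintegral_far_sq_sub_le hqm hf
    (setLIntegral_compl_ball_le_of_expDecay_right hD hmball hdoub ha (hρ.trans_le hρr) hρ hN hq hE)
    (setLIntegral_compl_ball_le_of_expDecay_left hD hDtop hmball hdoub ha hρ hρr hN hq hE)).trans ?_
  have hDn : D ^ (3 + 2 * (n + 1)) ≤
      D ^ 5 * ENNReal.ofReal ((r / ρ) ^ Real.logb 2 (D ^ 2).toReal) := by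
    rw [show 3 + 2 * (n + 1) = 5 + 2 * n by ring, pow_add, pow_mul]
    gcongr
    exact pow_le_ofReal_rpow_logb (one_le_pow₀ hD) (ENNReal.pow_ne_top hDtop) hn
  rw [ENNReal.ofReal_mul (Real.rpow_nonneg (div_nonneg (hρ.le.trans hρr) hρ.le) _)]
  calc 4 * (∫⁻ x, ENNReal.ofReal (f x ^ 2) ∂m) *
        (2 * D ^ (3 + 2 * (n + 1)) * c * ENNReal.ofReal (Real.exp (-(a * (r / ρ)))))
      ≤ 4 * (∫⁻ x, ENNReal.ofReal (f x ^ 2) ∂m) *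
        (2 * (D ^ 5 * ENNReal.ofReal ((r / ρ) ^ Real.logb 2 (D ^ 2).toReal)) * c *
          ENNReal.ofReal (Real.exp (-(a * (r / ρ))))) := by gcongr
    _ = _ := by ring

end FarPart

lemma tendsto_rpow_mul_rpow_mul_exp_neg_mul_atTop_nhds_zero (β γ : ℝ) {a : ℝ} (ha : 0 < a) :
    Tendsto (fun u => u ^ β * (u ^ γ * Real.exp (-(a * u)))) atTop (𝓝 0) :=
  (tendsto_rpow_mul_exp_neg_mul_atTop_nhds_zero (β + γ) a ha).congr' <| by
    filter_upwards [eventually_gt_atTop 0] with u hu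
    rw [Real.rpow_add hu, mul_assoc, neg_mul]

lemma eventually_mul_ofReal_exp_neg_mul_le {D ε : ℝ≥0∞} (hD : D ≠ ⊤) (hε : 0 < ε) {a : ℝ}
    (ha : 0 < a) : ∀ᶠ u in atTop, D * ENNReal.ofReal (Real.exp (-(a * u))) ≤ ε := by
  have h := ENNReal.Tendsto.const_mul (ENNReal.tendsto_ofReal (Real.tendsto_exp_atBot.comp
    (tendsto_neg_atTop_atBot.comp (tendsto_id.const_mul_atTop ha)))) (Or.inr hD)
  rw [ENNReal.ofReal_zero, mul_zero] at h
  exact h.eventually (ge_mem_nhds hε)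

lemma tendsto_nhds_zero_of_le_mul_ofReal {α : Type*} {l : Filter α} {F : α → ℝ≥0∞}
    {g : ℝ → ℝ} {v : α → ℝ} {A : ℝ≥0∞} (hg : Tendsto g atTop (𝓝 0)) (hv : Tendsto v l atTop)
    (hF : ∀ᶠ t in l, F t ≤ A * ENNReal.ofReal (g (v t))) (hA : A ≠ ⊤) :
    Tendsto F l (𝓝 0) := by
  refine tendsto_of_tendsto_of_tendsto_of_le_of_le' tendsto_const_nhds ?_
    (Eventually.of_forall fun _ => bot_le) hF
  simpa using ENNReal.Tendsto.const_mul ((ENNReal.tendsto_ofReal hg).comp hv) (Or.inr hA)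

theorem stmt19_general {X : Type*} [MetricSpace X] [MeasurableSpace X] [BorelSpace X]
    (m : Measure X)
    (D₀ : ℝ≥0∞) (hD₀ : 1 ≤ D₀) (hD₀top : D₀ ≠ ⊤)
    (hmball : ∀ (x : X) (ρ : ℝ), 0 < ρ →
      0 < m (Metric.ball x ρ) ∧ m (Metric.ball x ρ) < ⊤)
    (hdoub : ∀ (x : X) (ρ : ℝ), 0 < ρ →
      m (Metric.ball x (2*ρ)) ≤ D₀ * m (Metric.ball x ρ))
    (Ψ : ℝ → ℝ) (C β₁ β₂ : ℝ) (hC : 1 < C) (hβ₁ : 1 < β₁)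
    (hΨpos : ∀ ρ > (0:ℝ), 0 < Ψ ρ)
    (hΨmono : StrictMonoOn Ψ (Set.Ioi 0))
    (hreg : ∀ ρ R : ℝ, 0 < ρ → ρ ≤ R →
      C⁻¹ * (R/ρ)^β₁ ≤ Ψ R / Ψ ρ ∧ Ψ R / Ψ ρ ≤ C * (R/ρ)^β₂)
    (ψinv : ℝ → ℝ) (hinv : ∀ t > (0:ℝ), 0 < ψinv t ∧ Ψ (ψinv t) = t)
    (p : ℝ → X → X → ℝ≥0∞)
    (hpmeas : ∀ t, Measurable (Function.uncurry (p t)))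
    (C₁ c₁ c₂ : ℝ) (hC₁ : 0 < C₁) (hc₁ : 0 < c₁) (hc₂ : 0 < c₂)
    (hub : ∀ t > (0:ℝ), ∀ x y : X,
      p t x y ≤ ENNReal.ofReal
          (C₁ * Real.exp (-(c₁ * t * Phi Ψ (c₂ * dist x y / t)))) /
        m (Metric.ball x (ψinv t)))
    (f : X → ℝ) (hf : MemLp f 2 m) (r : ℝ) (hr : 0 < r) :
    Filter.Tendsto
      (fun t => ENNReal.ofReal (1/(2*t)) *
        ∫⁻ x, ∫⁻ y in (Metric.ball x r)ᶜ,
          ENNReal.ofReal ((f x - f y)^2) * p t x y ∂m ∂m)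
      (nhdsWithin 0 (Set.Ioi 0)) (nhds 0) := by
  have := sigmaFinite_of_measure_ball_lt_top fun x ρ hρ => (hmball x ρ hρ).2
  have := secondCountableTopology_of_measure_ball_pos (m := m) fun x ρ hρ => (hmball x ρ hρ).1
  have hf2 := hf.integrable_sq.lintegral_lt_top
  have hu := tendsto_div_rightInverse_atTop hΨpos hΨmono hinv hr
  set γ := Real.logb 2 (D₀ ^ 2).toReal
  set A := ENNReal.ofReal (C / Ψ r) * (8 * (∫⁻ x, ENNReal.ofReal (f x ^ 2) ∂m) * D₀ ^ 5 *
    ENNReal.ofReal (C₁ * Real.exp c₁)) with hA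
  refine tendsto_nhds_zero_of_le_mul_ofReal (A := A)
    (tendsto_rpow_mul_rpow_mul_exp_neg_mul_atTop_nhds_zero β₂ γ (mul_pos hc₁ hc₂))
    hu ?_ (by rw [hA]; finiteness)
  filter_upwards [self_mem_nhdsWithin, hu.eventually_ge_atTop 1, hu.eventually
      (eventually_mul_ofReal_exp_neg_mul_le (ENNReal.pow_ne_top hD₀top) (ε := 2⁻¹) (by norm_num)
        (mul_pos hc₁ hc₂))] with t ht hu1 hE
  obtain ⟨hρ, hΨρ⟩ := hinv t ht
  have hρr : ψinv t ≤ r := (one_le_div hρ).1 hu1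
  calc _ ≤ ENNReal.ofReal (C / Ψ r * (r / ψinv t) ^ β₂) *
        (8 * (∫⁻ x, ENNReal.ofReal (f x ^ 2) ∂m) * D₀ ^ 5 * ENNReal.ofReal (C₁ * Real.exp c₁) *
          ENNReal.ofReal ((r / ψinv t) ^ γ * Real.exp (-(c₁ * c₂ * (r / ψinv t))))) :=
        mul_le_mul'
          (ENNReal.ofReal_le_ofReal (one_div_two_mul_le_of_div_le (hΨpos r hr) ht hΨρ
            (hreg _ r hρ hρr).2))
          (lintegral_far_sq_sub_le_of_expDecay hD₀ hD₀top hmball hdoub (hpmeas t) (by positivity)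
            hρ hρr (le_exp_neg_dist_div_of_le_exp_neg_Phi (by linarith) hβ₁ hΨpos
              (fun ρ R h₁ h₂ => (hreg ρ R h₁ h₂).1) hρ hΨρ hC₁.le hc₁.le (hub t ht)) hE
            hf.aestronglyMeasurable.aemeasurable)
    _ = A * ENNReal.ofReal ((r / ψinv t) ^ β₂ *
          ((r / ψinv t) ^ γ * Real.exp (-(c₁ * c₂ * (r / ψinv t))))) := by
        rw [hA, ENNReal.ofReal_mul (div_nonneg (by linarith) (hΨpos r hr).le),
          ENNReal.ofReal_mul (Real.rpow_nonneg (div_nonneg hr.le hρ.le) β₂)]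
        ring

/-- for a conservative heat kernel satisfying the sub-Gaussian upper
bound on a doubling metric measure space, the off-diagonal ("far") part of the
approximating form of any `L²` function tends to `0` as `t ↓ 0`. -/
theorem stmt19 {X : Type*} [MetricSpace X] [MeasurableSpace X] [BorelSpace X]
    (m : Measure X)
    (D₀ : ℝ≥0∞) (hD₀ : 1 ≤ D₀) (hD₀top : D₀ ≠ ⊤)
    (hmball : ∀ (x : X) (ρ : ℝ), 0 < ρ →
      0 < m (Metric.ball x ρ) ∧ m (Metric.ball x ρ) < ⊤)
    (hdoub : ∀ (x : X) (ρ : ℝ), 0 < ρ →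
      m (Metric.ball x (2*ρ)) ≤ D₀ * m (Metric.ball x ρ))
    (Ψ : ℝ → ℝ) (C β₁ β₂ : ℝ) (hC : 1 < C) (hβ₁ : 1 < β₁) (hβ : β₁ < β₂)
    (hΨpos : ∀ ρ > (0:ℝ), 0 < Ψ ρ)
    (hΨmono : StrictMonoOn Ψ (Set.Ioi 0))
    (hΨcont : ContinuousOn Ψ (Set.Ioi 0))
    (hreg : ∀ ρ R : ℝ, 0 < ρ → ρ ≤ R →
      C⁻¹ * (R/ρ)^β₁ ≤ Ψ R / Ψ ρ ∧ Ψ R / Ψ ρ ≤ C * (R/ρ)^β₂)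
    (ψinv : ℝ → ℝ) (hinv : ∀ t > (0:ℝ), 0 < ψinv t ∧ Ψ (ψinv t) = t)
    (p : ℝ → X → X → ℝ≥0∞)
    (hpmeas : ∀ t, Measurable (Function.uncurry (p t)))
    (hcons : ∀ t > (0:ℝ), ∀ x : X, ∫⁻ y, p t x y ∂m = 1)
    (C₁ c₁ c₂ : ℝ) (hC₁ : 0 < C₁) (hc₁ : 0 < c₁) (hc₂ : 0 < c₂)
    (hub : ∀ t > (0:ℝ), ∀ x y : X,
      p t x y ≤ ENNReal.ofReal
          (C₁ * Real.exp (-(c₁ * t * Phi Ψ (c₂ * dist x y / t)))) /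
        m (Metric.ball x (ψinv t)))
    (f : X → ℝ) (hf : MemLp f 2 m) (r : ℝ) (hr : 0 < r) :
    Filter.Tendsto
      (fun t => ENNReal.ofReal (1/(2*t)) *
        ∫⁻ x, ∫⁻ y in (Metric.ball x r)ᶜ,
          ENNReal.ofReal ((f x - f y)^2) * p t x y ∂m ∂m)
      (nhdsWithin 0 (Set.Ioi 0)) (nhds 0) :=
  stmt19_general m D₀ hD₀ hD₀top hmball hdoub Ψ C β₁ β₂ hC hβ₁ hΨpos hΨmono hreg ψinv hinv p hpmeas
    C₁ c₁ c₂ hC₁ hc₁ hc₂ hub f hf r hr
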